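/- arXiv:1907.07457 — 7 statements merged into one kernel-verified Lean document; each statement's English description precedes it below -/
import Mathlib

section
/- Let λ = e^{2πiθ} with θ Diophantine. There exist constants C̃, r > 0 such that for every integer n ≥ 1, every integer m ≥ 0, and every complex number u with Re(u) > 1, one has |∑_{j=m}^{∞} λ^{nj}/(u+j)| ≤ C̃ n^r / |u+m|. -/
/-!
Put `μ = λ ^ n` and shift the sum so that it starts at `j = m`. Abel summation against the partial
sums of `∑ μ ^ k`, which are bounded by `2 / ‖μ - 1‖ ≤ (2 / c) n ^ r`, reduces the estimate to
`∑_{k ≥ 0} ‖1 / (w + k) - 1 / (w + k + 1)‖ ≤ 2 / ‖w‖` for `w = u + m`, `Re w > 0`. Since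
`√2 ‖z‖ ≥ Re z + |Im z|`, each term is at most `2 / ((s + k) (s + k + 1))` with
`s = Re w + |Im w| ≥ ‖w‖`, and these terms telescope.
-/

open Finset Filter Topology

theorem sum_range_mul_by_parts {R : Type*} [Ring R] (a b : ℕ → R) (N : ℕ) :
    ∑ i ∈ range N, a i * b i =
      ∑ k ∈ range N, (∑ i ∈ range (k + 1), a i) * (b k - b (k + 1)) +
        (∑ i ∈ range N, a i) * b N := by
  induction N with
  | zero => simp
  | succ N ih =>
    simp only [sum_range_succ _ N, ih]
    noncomm_ring

theorem exists_tendsto_sum_range_mul_of_bounded {R : Type*} [NormedRing R] [CompleteSpace R]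
    {a b : ℕ → R} {M : ℝ} (ha : ∀ k, ‖∑ i ∈ range k, a i‖ ≤ M)
    (hdiff : Summable fun k => ‖b k - b (k + 1)‖) (hb : Tendsto b atTop (𝓝 0)) :
    ∃ S, Tendsto (fun N => ∑ i ∈ range N, a i * b i) atTop (𝓝 S) ∧
      ‖S‖ ≤ M * ∑' k, ‖b k - b (k + 1)‖ := by
  set A : ℕ → R := fun k => ∑ i ∈ range k, a i
  have hterm : ∀ k, ‖A (k + 1) * (b k - b (k + 1))‖ ≤ M * ‖b k - b (k + 1)‖ := fun k =>
    (norm_mul_le _ _).trans (mul_le_mul_of_nonneg_right (ha _) (norm_nonneg _))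
  have hsum : Summable fun k => A (k + 1) * (b k - b (k + 1)) :=
    .of_norm_bounded (hdiff.mul_left M) hterm
  have hboundary : Tendsto (fun N => A N * b N) atTop (𝓝 0) := by
    refine squeeze_zero_norm (fun N => (norm_mul_le _ _).trans
      (mul_le_mul_of_nonneg_right (ha N) (norm_nonneg _))) ?_
    simpa using (tendsto_zero_iff_norm_tendsto_zero.mp hb).const_mul M
  refine ⟨_, ?_, tsum_of_norm_bounded (hdiff.hasSum.mul_left M) hterm⟩
  simp_rw [sum_range_mul_by_parts a b]
  simpa using hsum.hasSum.tendsto_sum_nat.add hboundary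

theorem norm_geom_sum_le {𝕜 : Type*} [NormedField 𝕜] {μ : 𝕜} (hμ : ‖μ‖ ≤ 1) (h1 : μ ≠ 1)
    (k : ℕ) : ‖∑ i ∈ range k, μ ^ i‖ ≤ 2 / ‖μ - 1‖ := by
  rw [geom_sum_eq h1, norm_div]
  gcongr
  calc ‖μ ^ k - 1‖ ≤ ‖μ ^ k‖ + ‖(1 : 𝕜)‖ := norm_sub_le _ _
    _ ≤ 1 + 1 := by
      gcongr
      · rw [norm_pow]; exact pow_le_one₀ (norm_nonneg _) hμ
      · exact norm_one.le
    _ = 2 := one_add_one_eq_two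

theorem Complex.re_add_abs_im_le_sqrt_two_mul_norm (z : ℂ) : z.re + |z.im| ≤ √2 * ‖z‖ := by
  rw [← Real.sqrt_sq (norm_nonneg z), ← Real.sqrt_mul zero_le_two, Complex.sq_norm,
    Complex.normSq_apply]
  apply Real.le_sqrt_of_sq_le
  nlinarith [sq_nonneg (z.re - |z.im|), sq_abs z.im]

theorem Complex.norm_inv_add_natCast_sub_inv_le {u : ℂ} (hu : 0 < u.re) (k : ℕ) :
    ‖(u + k)⁻¹ - (u + (k + 1 : ℕ))⁻¹‖ ≤
      2 / (u.re + |u.im| + k) - 2 / (u.re + |u.im| + (k + 1 : ℕ)) := by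
  have hne : ∀ j : ℕ, u + j ≠ 0 := fun j h =>
    (add_pos_of_pos_of_nonneg hu (Nat.cast_nonneg j)).ne' (by simpa using congrArg Complex.re h)
  have hlow : ∀ j : ℕ, (u.re + |u.im| + j) ≤ √2 * ‖u + j‖ := fun j => by
    simpa [add_right_comm] using (u + j).re_add_abs_im_le_sqrt_two_mul_norm
  have hpos : ∀ j : ℕ, 0 < u.re + |u.im| + j := fun j => by positivity
  calc ‖(u + k)⁻¹ - (u + (k + 1 : ℕ))⁻¹‖ = 1 / (‖u + k‖ * ‖u + (k + 1 : ℕ)‖) := by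
        rw [inv_sub_inv (hne k) (hne (k + 1)), norm_div, norm_mul]
        push_cast
        simp
    _ ≤ 2 / ((u.re + |u.im| + k) * (u.re + |u.im| + (k + 1 : ℕ))) := by
        have hprod := mul_le_mul (hlow k) (hlow (k + 1)) (hpos (k + 1)).le (by positivity)
        rw [mul_mul_mul_comm, Real.mul_self_sqrt zero_le_two] at hprod
        rw [div_le_div_iff₀ (mul_pos (norm_pos_iff.mpr (hne k)) (norm_pos_iff.mpr (hne (k + 1))))
          (mul_pos (hpos k) (hpos (k + 1)))]
        linarith
    _ = _ := by
        push_cast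
        field_simp
        ring

theorem Complex.sum_range_norm_inv_add_natCast_sub_inv_le {u : ℂ} (hu : 0 < u.re) (N : ℕ) :
    ∑ k ∈ range N, ‖(u + k)⁻¹ - (u + (k + 1 : ℕ))⁻¹‖ ≤ 2 / ‖u‖ := by
  set f : ℕ → ℝ := fun j => 2 / (u.re + |u.im| + j)
  calc ∑ k ∈ range N, ‖(u + k)⁻¹ - (u + (k + 1 : ℕ))⁻¹‖
      ≤ ∑ k ∈ range N, (f k - f (k + 1)) :=
        sum_le_sum fun k _ => Complex.norm_inv_add_natCast_sub_inv_le hu k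
    _ = f 0 - f N := sum_range_sub' f N
    _ ≤ f 0 := sub_le_self _ (by positivity)
    _ ≤ 2 / ‖u‖ := by
        have hle := Complex.norm_le_abs_re_add_abs_im u
        rw [abs_of_pos hu] at hle
        simp only [f, Nat.cast_zero, add_zero]
        exact div_le_div_of_nonneg_left zero_le_two (hu.trans_le (Complex.re_le_norm u)) hle

theorem Complex.summable_norm_inv_add_natCast_sub_inv {u : ℂ} (hu : 0 < u.re) :
    Summable fun k : ℕ => ‖(u + k)⁻¹ - (u + (k + 1 : ℕ))⁻¹‖ :=
  summable_of_sum_range_le (fun _ => norm_nonneg _)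
    (Complex.sum_range_norm_inv_add_natCast_sub_inv_le hu)

theorem Complex.tsum_norm_inv_add_natCast_sub_inv_le {u : ℂ} (hu : 0 < u.re) :
    ∑' k : ℕ, ‖(u + k)⁻¹ - (u + (k + 1 : ℕ))⁻¹‖ ≤ 2 / ‖u‖ :=
  (Complex.summable_norm_inv_add_natCast_sub_inv hu).tsum_le_of_sum_range_le
    (Complex.sum_range_norm_inv_add_natCast_sub_inv_le hu)

theorem Complex.tendsto_inv_add_natCast_atTop {u : ℂ} (hu : 0 < u.re) :
    Tendsto (fun k : ℕ => (u + k)⁻¹) atTop (𝓝 0) := by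
  rw [tendsto_zero_iff_norm_tendsto_zero]
  simp_rw [norm_inv]
  refine tendsto_inv_atTop_zero.comp (tendsto_atTop_mono (fun k => ?_) tendsto_natCast_atTop_atTop)
  calc (k : ℝ) ≤ (u + k).re := by rw [Complex.add_re, Complex.natCast_re]; linarith
    _ ≤ ‖u + k‖ := Complex.re_le_norm _

theorem Complex.exists_tendsto_sum_range_pow_mul_inv_add {μ u : ℂ} (hμ : ‖μ‖ ≤ 1) (h1 : μ ≠ 1)
    (hu : 0 < u.re) :
    ∃ S, Tendsto (fun N => ∑ k ∈ range N, μ ^ k * (u + k)⁻¹) atTop (𝓝 S) ∧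
      ‖S‖ ≤ 2 / ‖μ - 1‖ * (2 / ‖u‖) := by
  obtain ⟨S, hS, hSle⟩ := exists_tendsto_sum_range_mul_of_bounded (norm_geom_sum_le hμ h1)
    (Complex.summable_norm_inv_add_natCast_sub_inv hu) (Complex.tendsto_inv_add_natCast_atTop hu)
  refine ⟨S, hS, hSle.trans ?_⟩
  gcongr
  exact Complex.tsum_norm_inv_add_natCast_sub_inv_le hu

/-- Uniform tail estimate `|∑_{j=m}^∞ λ^{nj}/(u+j)| ≤ C̃ n^r / |u+m|`
for `Re u > 1`, with constants independent of `n ≥ 1`, `m ≥ 0` and `u`. -/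
theorem stmt2 (θ : ℝ) (l : ℂ) (hl : l = Complex.exp (2 * Real.pi * Complex.I * θ))
    (hdio : ∃ c r : ℝ, 0 < c ∧ 0 < r ∧ ∀ n : ℕ, 1 ≤ n →
      c * (n : ℝ) ^ (-r) ≤ ‖l ^ n - 1‖) :
    ∃ C r : ℝ, 0 < C ∧ 0 < r ∧ ∀ n m : ℕ, 1 ≤ n → ∀ u : ℂ, 1 < u.re →
      ∃ S : ℂ,
        Tendsto (fun N : ℕ => ∑ j ∈ Finset.Ico m N, l ^ (n * j) / (u + j))
          atTop (nhds S) ∧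
        ‖S‖ ≤ C * (n : ℝ) ^ r / ‖u + m‖ := by
  obtain ⟨c, r, hc, hr, hD⟩ := hdio
  refine ⟨4 / c, r, by positivity, hr, fun n m hn u hu => ?_⟩
  have hl1 : ‖l‖ = 1 := by
    rw [hl, show 2 * Real.pi * Complex.I * θ = ((2 * Real.pi * θ : ℝ) : ℂ) * Complex.I by
      push_cast; ring]
    exact Complex.norm_exp_ofReal_mul_I _
  have hnr : 0 < (n : ℝ) ^ r := by positivity
  have hgap : c / (n : ℝ) ^ r ≤ ‖l ^ n - 1‖ := by
    simpa [Real.rpow_neg, div_eq_mul_inv] using hD n hn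
  have hgap_pos : 0 < ‖l ^ n - 1‖ := (div_pos hc hnr).trans_le hgap
  have hμ : ‖l ^ n‖ ≤ 1 := by rw [norm_pow, hl1, one_pow]
  obtain ⟨S, hS, hSle⟩ := Complex.exists_tendsto_sum_range_pow_mul_inv_add hμ
    (sub_ne_zero.mp (norm_pos_iff.mp hgap_pos)) (show 0 < (u + m).re by
      rw [Complex.add_re, Complex.natCast_re]; linarith [(m.cast_nonneg : (0 : ℝ) ≤ m)])
  refine ⟨(l ^ n) ^ m * S, ?_, ?_⟩
  · have hshift := (hS.const_mul ((l ^ n) ^ m)).comp (tendsto_sub_atTop_nat m)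
    refine hshift.congr fun N => ?_
    simp only [Function.comp_apply, mul_sum, sum_Ico_eq_sum_range]
    refine sum_congr rfl fun k _ => ?_
    rw [pow_mul, pow_add, Nat.cast_add, ← add_assoc, div_eq_mul_inv, mul_assoc]
  · calc ‖(l ^ n) ^ m * S‖ ≤ ‖S‖ := by
          rw [norm_mul, norm_pow]
          exact mul_le_of_le_one_left (norm_nonneg _) (pow_le_one₀ (norm_nonneg _) hμ)
      _ ≤ 2 / ‖l ^ n - 1‖ * (2 / ‖u + m‖) := hSle
      _ ≤ 2 / (c / (n : ℝ) ^ r) * (2 / ‖u + m‖) := by gcongr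
      _ = 4 / c * (n : ℝ) ^ r / ‖u + m‖ := by field_simp; ring
end

section
/- Let λ = e^{2πiθ} with θ Diophantine and let f be entire with f(w) = ∑_{k≥1} d_k w^k, f(0)=0. Then for every δ > 0 the series τ₁(u,w) := ∑_{k=0}^{∞} f(λ^k w)/(u+k) converges uniformly on compact subsets of {(u,w) : Re(u) > 1, |w| ≤ δ}, and there is a constant C(δ) > 0 such that |τ₁(u,w)| ≤ C(δ)/|u| on this set. -/
/-!
Expand `f(w) = ∑_{j ≥ 1} d_j w^j`; exchanging the two summations turns a block
`∑_{N ≤ k < M} f(λ^k w)/(u + k)` into `∑_j d_j w^j ∑_{N ≤ k < M} λ^{jk}/(u + k)`.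
The partial sums of the geometric series in `λ^j` are at most `2/|λ^j - 1| ≤ 2 j^r/c`, so Abel
summation against the weights `1/(u + k)`, whose total variation beyond `N` is `O(1/(|u| + N))`,
bounds each inner block by `O(j^r/(|u| + N))`. Since `f` is entire, `∑ |d_j| δ^j j^r` converges,
and every block is `O(1/(|u| + N))` uniformly for `Re u > 1`, `|w| ≤ δ`: the series is uniformly
Cauchy there, and the block with `N = 0` gives the bound `C/|u|`.
-/

open Filter Topology Finset

section AbelSummation

variable {𝕜 E : Type*} [NormedField 𝕜] [SeminormedAddCommGroup E] [NormedSpace 𝕜 E]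

theorem norm_sum_Ico_smul_le_of_norm_sum_range_le (f : ℕ → 𝕜) {g : ℕ → E} {B : ℝ}
    (hB : ∀ n, ‖∑ i ∈ range n, g i‖ ≤ B) {m n : ℕ} (hmn : m < n) :
    ‖∑ i ∈ Ico m n, f i • g i‖ ≤
      (‖f (n - 1)‖ + ‖f m‖ + ∑ i ∈ Ico m (n - 1), ‖f (i + 1) - f i‖) * B := by
  rw [sum_Ico_by_parts f g hmn]
  calc _ ≤ ‖f (n - 1) • ∑ i ∈ range n, g i‖ + ‖f m • ∑ i ∈ range m, g i‖
        + ∑ i ∈ Ico m (n - 1), ‖(f (i + 1) - f i) • ∑ j ∈ range (i + 1), g j‖ :=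
      (norm_sub_le _ _).trans (add_le_add (norm_sub_le _ _) (norm_sum_le _ _))
    _ ≤ _ := by
      simp only [norm_smul, add_mul, sum_mul]
      gcongr <;> apply hB

end AbelSummation

namespace Complex

variable {u : ℂ}

theorem norm_add_natCast_div_two_le (hu : 0 ≤ u.re) (k : ℕ) : (‖u‖ + k) / 2 ≤ ‖u + k‖ := by
  have hu_le : ‖u‖ ≤ ‖u + k‖ := by
    rw [← sq_le_sq₀ (norm_nonneg _) (norm_nonneg _), Complex.sq_norm, Complex.sq_norm,
      normSq_apply, normSq_apply]
    simp only [add_re, natCast_re, add_im, natCast_im, add_zero]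
    nlinarith [k.cast_nonneg (α := ℝ)]
  have hk_le : (k : ℝ) ≤ ‖u + k‖ := by
    simpa using (show (k : ℝ) ≤ (u + k).re by simpa using hu).trans (re_le_norm _)
  linarith

theorem norm_pos_of_re_pos (hu : 0 < u.re) : 0 < ‖u‖ :=
  hu.trans_le (re_le_norm u)

theorem norm_inv_add_natCast_le (hu : 0 < u.re) (k : ℕ) : ‖(u + k)⁻¹‖ ≤ 2 / (‖u‖ + k) := by
  have := norm_pos_of_re_pos hu
  rw [norm_inv, ← inv_div]
  exact inv_anti₀ (by positivity) (norm_add_natCast_div_two_le hu.le k)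

theorem norm_inv_add_natCast_succ_sub_le (hu : 0 < u.re) (k : ℕ) :
    ‖(u + (k + 1 : ℕ))⁻¹ - (u + k)⁻¹‖ ≤ 4 * ((‖u‖ + k)⁻¹ - (‖u‖ + (k + 1 : ℕ))⁻¹) := by
  have hne (i : ℕ) : u + i ≠ 0 :=
    ne_zero_of_re_pos (by simp only [add_re, natCast_re]; positivity)
  have := norm_pos_of_re_pos hu
  have hsub : (u + (k + 1 : ℕ))⁻¹ - (u + k)⁻¹ = -((u + k)⁻¹ * (u + (k + 1 : ℕ))⁻¹) := by
    have h₀ := hne k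
    have h₁ := hne (k + 1)
    push_cast at h₁ ⊢
    field_simp
    ring
  calc ‖(u + (k + 1 : ℕ))⁻¹ - (u + k)⁻¹‖ = ‖(u + k)⁻¹‖ * ‖(u + (k + 1 : ℕ))⁻¹‖ := by
        rw [hsub, norm_neg, norm_mul]
    _ ≤ 2 / (‖u‖ + k) * (2 / (‖u‖ + (k + 1 : ℕ))) := by
        gcongr <;> exact norm_inv_add_natCast_le hu _
    _ = 4 * ((‖u‖ + k)⁻¹ - (‖u‖ + (k + 1 : ℕ))⁻¹) := by
        push_cast
        field_simp
        ring

end Complex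

theorem norm_sum_Ico_div_add_natCast_le {g : ℕ → ℂ} {B : ℝ}
    (hB : ∀ n, ‖∑ i ∈ range n, g i‖ ≤ B) {u : ℂ} (hu : 0 < u.re) (N M : ℕ) :
    ‖∑ k ∈ Ico N M, g k / (u + k)‖ ≤ 8 * B / (‖u‖ + N) := by
  have hu₀ := Complex.norm_pos_of_re_pos hu
  have hB₀ : 0 ≤ B := by simpa using hB 0
  rcases le_or_gt M N with hMN | hNM
  · rw [Ico_eq_empty_of_le hMN, sum_empty, norm_zero]
    positivity
  have hsmul : ∑ k ∈ Ico N M, g k / (u + k) = ∑ k ∈ Ico N M, (u + k)⁻¹ • g k := by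
    simp only [div_eq_inv_mul, smul_eq_mul]
  rw [hsmul]
  refine (norm_sum_Ico_smul_le_of_norm_sum_range_le _ hB hNM).trans ?_
  have hlast : ‖(u + (M - 1 : ℕ))⁻¹‖ ≤ 2 / (‖u‖ + N) :=
    (Complex.norm_inv_add_natCast_le hu _).trans <| by gcongr; omega
  have hvar : ∑ i ∈ Ico N (M - 1), ‖(u + (i + 1 : ℕ))⁻¹ - (u + i)⁻¹‖ ≤ 4 / (‖u‖ + N) := by
    calc _ ≤ ∑ i ∈ Ico N (M - 1), 4 * ((‖u‖ + i)⁻¹ - (‖u‖ + (i + 1 : ℕ))⁻¹) :=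
          sum_le_sum fun i _ => Complex.norm_inv_add_natCast_succ_sub_le hu i
      _ = 4 * ((‖u‖ + N)⁻¹ - (‖u‖ + (M - 1 : ℕ))⁻¹) := by
          have := sum_Ico_sub (fun i : ℕ => -(‖u‖ + i)⁻¹) (show N ≤ M - 1 by omega)
          simp only [neg_sub_neg] at this
          rw [← mul_sum, this]
      _ ≤ 4 / (‖u‖ + N) := by
          rw [div_eq_mul_inv]
          gcongr
          exact sub_le_self _ (by positivity)
  calc _ ≤ (2 / (‖u‖ + N) + 2 / (‖u‖ + N) + 4 / (‖u‖ + N)) * B := by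
        gcongr
        exact Complex.norm_inv_add_natCast_le hu N
    _ = 8 * B / (‖u‖ + N) := by ring

section GeometricSums

variable {𝕜 : Type*} [NormedDivisionRing 𝕜]

theorem norm_sub_one_mul_norm_geom_sum_le {x : 𝕜} (hx : ‖x‖ ≤ 1) (n : ℕ) :
    ‖x - 1‖ * ‖∑ i ∈ range n, x ^ i‖ ≤ 2 := by
  rw [← norm_mul, mul_geom_sum]
  calc ‖x ^ n - 1‖ ≤ ‖x ^ n‖ + ‖(1 : 𝕜)‖ := norm_sub_le _ _
    _ ≤ 1 + 1 := by
        rw [norm_pow, norm_one]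
        gcongr
        exact pow_le_one₀ (norm_nonneg x) hx
    _ = 2 := one_add_one_eq_two

theorem norm_geom_sum_pow_le_of_diophantine {l : 𝕜} (hl : ‖l‖ ≤ 1) {c r : ℝ} (hc : 0 < c)
    (hdio : ∀ n : ℕ, 1 ≤ n → c * (n : ℝ) ^ (-r) ≤ ‖l ^ n - 1‖) {j : ℕ} (hj : 1 ≤ j) (n : ℕ) :
    ‖∑ i ∈ range n, (l ^ j) ^ i‖ ≤ 2 * (j : ℝ) ^ ⌈r⌉₊ / c := by
  have hj₀ : (0 : ℝ) < j := by exact_mod_cast hj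
  have hlj : ‖l ^ j‖ ≤ 1 := by rw [norm_pow]; exact pow_le_one₀ (norm_nonneg l) hl
  calc ‖∑ i ∈ range n, (l ^ j) ^ i‖ ≤ 2 / (c * (j : ℝ) ^ (-r)) := by
        rw [le_div_iff₀' (by positivity)]
        exact (mul_le_mul_of_nonneg_right (hdio j hj) (norm_nonneg _)).trans
          (norm_sub_one_mul_norm_geom_sum_le hlj n)
    _ = 2 * (j : ℝ) ^ r / c := by
        rw [Real.rpow_neg hj₀.le]
        field_simp
    _ ≤ 2 * (j : ℝ) ^ ⌈r⌉₊ / c := by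
        rw [← Real.rpow_natCast]
        gcongr
        · exact_mod_cast hj
        · exact Nat.le_ceil r

end GeometricSums

theorem FormalMultilinearSeries.summable_norm_mul_pow_mul_natCast_pow {𝕜 E F : Type*}
    [NontriviallyNormedField 𝕜] [NormedAddCommGroup E] [NormedSpace 𝕜 E] [NormedAddCommGroup F]
    [NormedSpace 𝕜 F] (p : FormalMultilinearSeries 𝕜 E F) {r : NNReal} (h : ↑r < p.radius)
    (m : ℕ) : Summable fun n => ‖p n‖ * (r : ℝ) ^ n * (n : ℝ) ^ m := by
  obtain ⟨a, ha, C, -, hC⟩ := p.norm_mul_pow_le_mul_pow_of_lt_radius h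
  have ha₁ : ‖a‖ < 1 := by rw [Real.norm_of_nonneg ha.1.le]; exact ha.2
  refine .of_nonneg_of_le (fun n => by positivity) (fun n => ?_)
    ((summable_pow_mul_geometric_of_norm_lt_one m ha₁).mul_left C)
  calc ‖p n‖ * (r : ℝ) ^ n * (n : ℝ) ^ m ≤ C * a ^ n * (n : ℝ) ^ m :=
        mul_le_mul_of_nonneg_right (hC n) (by positivity)
    _ = C * ((n : ℝ) ^ m * a ^ n) := by ring

theorem HasFPowerSeriesOnBall.norm_sum_orbit_div_le {𝕜 : Type*} [NontriviallyNormedField 𝕜]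
    {f : 𝕜 → 𝕜} {p : FormalMultilinearSeries 𝕜 𝕜 𝕜} (hf : HasFPowerSeriesOnBall f p 0 ⊤)
    (hf₀ : f 0 = 0) (s : Finset ℕ) (a : ℕ → 𝕜) (l : 𝕜) {w : 𝕜} {δ : ℝ} (hw : ‖w‖ ≤ δ)
    {b : ℕ → ℝ} (hb : ∀ j, 1 ≤ j → ‖∑ k ∈ s, (l ^ j) ^ k / a k‖ ≤ b j)
    (hsum : Summable fun j => ‖p.coeff j‖ * δ ^ j * b j) :
    ‖∑ k ∈ s, f (l ^ k * w) / a k‖ ≤ ∑' j, ‖p.coeff j‖ * δ ^ j * b j := by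
  have hf_eq : ∀ z, HasSum (fun j => p.coeff j * z ^ j) (f z) := fun z => by
    simpa [FormalMultilinearSeries.apply_eq_pow_smul_coeff, mul_comm] using
      hf.hasSum (y := z) (by simp)
  have hp₀ : p.coeff 0 = 0 := hf₀ ▸ hf.coeff_zero _
  have hswap : HasSum (fun j => p.coeff j * w ^ j * ∑ k ∈ s, (l ^ j) ^ k / a k)
      (∑ k ∈ s, f (l ^ k * w) / a k) := by
    convert hasSum_sum fun k _ => (hf_eq (l ^ k * w)).div_const (a k) using 1
    funext j
    rw [mul_sum]
    refine sum_congr rfl fun k _ => ?_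
    rw [mul_pow, ← pow_mul, ← pow_mul, mul_comm j k]
    ring
  refine hswap.norm_le_of_bounded hsum.hasSum fun j => ?_
  rcases Nat.eq_zero_or_pos j with rfl | hj
  · simp [hp₀]
  · rw [norm_mul, norm_mul, norm_pow]
    have hδ : 0 ≤ δ := (norm_nonneg w).trans hw
    gcongr
    exact hb j hj

theorem exists_tendstoUniformlyOn_of_dist_le {α β : Type*} [PseudoMetricSpace β] [CompleteSpace β]
    {F : ℕ → α → β} {s : Set α} {ε : ℕ → ℝ} (hε : Tendsto ε atTop (𝓝 0))
    (hF : ∀ x ∈ s, ∀ n m, n ≤ m → dist (F n x) (F m x) ≤ ε n) :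
    ∃ G : α → β, TendstoUniformlyOn F G atTop s := by
  have hlim : ∀ x, ∃ y, x ∈ s → Tendsto (F · x) atTop (𝓝 y) := fun x => by
    by_cases hx : x ∈ s
    · obtain ⟨y, hy⟩ := cauchySeq_tendsto_of_complete (cauchySeq_of_le_tendsto_0' ε (hF x hx) hε)
      exact ⟨y, fun _ => hy⟩
    · exact ⟨F 0 x, fun h => absurd h hx⟩
  choose G hG using hlim
  refine ⟨G, Metric.tendstoUniformlyOn_iff.2 fun η hη => ?_⟩
  filter_upwards [hε.eventually (gt_mem_nhds hη)] with n hn x hx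
  refine lt_of_le_of_lt (le_of_tendsto ((hG x hx).dist tendsto_const_nhds) ?_) hn
  filter_upwards [eventually_ge_atTop n] with m hm
  exact dist_comm (F n x) (F m x) ▸ hF x hx n m hm

theorem exists_norm_sum_Ico_orbit_div_le_of_diophantine {l : ℂ} (hl : ‖l‖ ≤ 1) {c r : ℝ}
    (hc : 0 < c) (hdio : ∀ n : ℕ, 1 ≤ n → c * (n : ℝ) ^ (-r) ≤ ‖l ^ n - 1‖) {f : ℂ → ℂ}
    (hf : Differentiable ℂ f) (hf₀ : f 0 = 0) {δ : ℝ} (hδ : 0 ≤ δ) :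
    ∃ K, 0 ≤ K ∧ ∀ u w : ℂ, 0 < u.re → ‖w‖ ≤ δ → ∀ N M : ℕ,
      ‖∑ k ∈ Ico N M, f (l ^ k * w) / (u + k)‖ ≤ K / (‖u‖ + N) := by
  obtain ⟨p, hp⟩ : ∃ p, HasFPowerSeriesOnBall f p 0 ⊤ := ⟨_, hf.hasFPowerSeriesOnBall 0 one_pos⟩
  set m := ⌈r⌉₊
  have hA : Summable fun j => ‖p.coeff j‖ * δ ^ j * (j : ℝ) ^ m := by
    simpa only [FormalMultilinearSeries.norm_apply_eq_norm_coef, Real.coe_toNNReal _ hδ] using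
      p.summable_norm_mul_pow_mul_natCast_pow (r := δ.toNNReal)
        (ENNReal.coe_lt_top.trans_le hp.r_le) m
  set A := ∑' j, ‖p.coeff j‖ * δ ^ j * (j : ℝ) ^ m
  refine ⟨16 * A / c, by positivity, fun u w hu hw N M => ?_⟩
  have hb (j : ℕ) (hj : 1 ≤ j) := norm_sum_Ico_div_add_natCast_le
    (norm_geom_sum_pow_le_of_diophantine hl hc hdio hj) hu N M
  calc _ ≤ ∑' j, ‖p.coeff j‖ * δ ^ j * (8 * (2 * (j : ℝ) ^ m / c) / (‖u‖ + N)) :=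
        hp.norm_sum_orbit_div_le hf₀ _ _ l hw hb
          ((hA.mul_right (16 / c / (‖u‖ + N))).congr fun j => by ring)
    _ = A * (16 / c / (‖u‖ + N)) := by
        rw [← tsum_mul_right]
        congr 1
        funext j
        ring
    _ = 16 * A / c / (‖u‖ + N) := by ring

/-- For `f` entire with `f(0)=0`, the series `∑_{k≥0} f(λ^k w)/(u+k)`
converges uniformly on compact subsets of `{Re u > 1, |w| ≤ δ}` and its sum is
bounded by `C(δ)/|u|` there. -/
theorem stmt5 (θ : ℝ) (l : ℂ) (hl : l = Complex.exp (2 * Real.pi * Complex.I * θ))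
    (hdio : ∃ c r : ℝ, 0 < c ∧ 0 < r ∧ ∀ n : ℕ, 1 ≤ n →
      c * (n : ℝ) ^ (-r) ≤ ‖l ^ n - 1‖)
    (f : ℂ → ℂ) (hf : Differentiable ℂ f) (hf0 : f 0 = 0)
    (δ : ℝ) (hδ : 0 < δ) :
    ∃ S : ℂ × ℂ → ℂ, ∃ C : ℝ, 0 < C ∧
      (∀ K : Set (ℂ × ℂ), IsCompact K → K ⊆ {p : ℂ × ℂ | 1 < p.1.re ∧ ‖p.2‖ ≤ δ} →
        TendstoUniformlyOn
          (fun (N : ℕ) (p : ℂ × ℂ) => ∑ k ∈ Finset.range N, f (l ^ k * p.2) / (p.1 + k))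
          S atTop K) ∧
      (∀ p : ℂ × ℂ, 1 < p.1.re → ‖p.2‖ ≤ δ → ‖S p‖ ≤ C / ‖p.1‖) := by
  obtain ⟨c, r, hc, -, hdio⟩ := hdio
  have hl₁ : ‖l‖ ≤ 1 := by simp [hl, Complex.norm_exp]
  obtain ⟨K, hK, htail⟩ :=
    exists_norm_sum_Ico_orbit_div_le_of_diophantine hl₁ hc hdio hf hf0 hδ.le
  set D : Set (ℂ × ℂ) := {q | 1 < q.1.re ∧ ‖q.2‖ ≤ δ}
  obtain ⟨S, hS⟩ := exists_tendstoUniformlyOn_of_dist_le (s := D)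
    (F := fun (N : ℕ) (q : ℂ × ℂ) => ∑ k ∈ range N, f (l ^ k * q.2) / (q.1 + k))
    (ε := fun N => K / (N + 1))
    (by simpa [Function.comp_def] using
      (tendsto_const_div_atTop_nhds_zero_nat K).comp (tendsto_add_atTop_nat 1))
    fun q ⟨hu, hw⟩ n m hnm => by
      rw [dist_comm, dist_eq_norm, ← sum_Ico_eq_sub _ hnm]
      exact (htail q.1 q.2 (by linarith) hw n m).trans <|
        div_le_div_of_nonneg_left hK (by positivity) (by linarith [Complex.re_le_norm q.1])
  refine ⟨S, K + 1, by positivity, fun Kc _ hKc => hS.mono hKc, fun q hu hw => ?_⟩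
  have hu₀ : 0 < ‖q.1‖ := Complex.norm_pos_of_re_pos (by linarith)
  calc ‖S q‖ ≤ K / ‖q.1‖ := le_of_tendsto (hS.tendsto_at (show q ∈ D from ⟨hu, hw⟩)).norm <|
        Eventually.of_forall fun N => by
          simpa only [range_eq_Ico, Nat.cast_zero, add_zero] using
            htail q.1 q.2 (by linarith) hw 0 N
    _ ≤ (K + 1) / ‖q.1‖ := by gcongr; linarith
end

section
/- Let λ = e^{2πiθ} with θ Diophantine and let f be entire with f(0)=0. For every δ > 0 there exists R > 0 such that the map τ(u,w) = (u − ∑_{k=0}^{∞} f(λ^k w)/(u+k), w) is injective on the set {(u,w) : Re(u) > R, |w| < δ}. -/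
open Filter

/-! Since `|λ| = 1`, the coefficients `f (λ^k w)` are bounded by `M := sup_{|w| ≤ δ} |f|`, and
comparing the series termwise gives `|S(u,w) - S(u',w)| ≤ M |u - u'| ∑_k 1/(R+k)² ≤ M |u - u'|/(R-1)`
for `Re u, Re u' > R`. For `R - 1 > M`, the map `u ↦ u - S(u,w)` is therefore injective. -/

theorem sum_range_one_div_add_mul_self_le {R : ℝ} (hR : 1 < R) (N : ℕ) :
    ∑ k ∈ Finset.range N, 1 / ((R + k) * (R + k)) ≤ 1 / (R - 1) := by
  -- telescoping against `1/(R-1+k) - 1/(R+k)`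
  have hpos : ∀ k : ℕ, 0 < R - 1 + k := fun k => by positivity
  calc ∑ k ∈ Finset.range N, 1 / ((R + k) * (R + k))
      ≤ ∑ k ∈ Finset.range N, (1 / (R - 1 + k) - 1 / (R - 1 + (k + 1 : ℕ))) := by
        refine Finset.sum_le_sum fun k _ => ?_
        have hk : R - 1 + ((k + 1 : ℕ) : ℝ) = R + k := by push_cast; ring
        rw [hk, div_sub_div _ _ (hpos k).ne' (by linarith [hpos k]), one_mul, mul_one,
          show R + k - (R - 1 + k) = 1 by ring]
        gcongr
        linarith
    _ = 1 / (R - 1) - 1 / (R - 1 + N) := by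
        rw [Finset.sum_range_sub' (fun k : ℕ => 1 / (R - 1 + k))]
        simp only [Nat.cast_zero, add_zero]
    _ ≤ 1 / (R - 1) := by linarith [one_div_pos.mpr (hpos N)]

theorem norm_div_sub_div_le_of_le_re {a u v : ℂ} {x : ℝ} (hx : 0 < x) (hu : x ≤ u.re)
    (hv : x ≤ v.re) : ‖a / u - a / v‖ ≤ ‖a‖ * ‖u - v‖ / (x * x) := by
  have hxu : x ≤ ‖u‖ := hu.trans (Complex.re_le_norm u)
  have hxv : x ≤ ‖v‖ := hv.trans (Complex.re_le_norm v)
  have hu0 : u ≠ 0 := norm_pos_iff.mp (hx.trans_le hxu)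
  have hv0 : v ≠ 0 := norm_pos_iff.mp (hx.trans_le hxv)
  rw [div_sub_div _ _ hu0 hv0, show a * v - u * a = a * (v - u) by ring, norm_div, norm_mul,
    norm_mul, norm_sub_rev]
  gcongr

theorem norm_sub_le_of_tendsto_sum_div_add {a : ℕ → ℂ} {M R : ℝ} (ha : ∀ k, ‖a k‖ ≤ M)
    (hR : 1 < R) {u v Su Sv : ℂ} (hu : R < u.re) (hv : R < v.re)
    (hSu : Tendsto (fun N => ∑ k ∈ Finset.range N, a k / (u + k)) atTop (nhds Su))
    (hSv : Tendsto (fun N => ∑ k ∈ Finset.range N, a k / (v + k)) atTop (nhds Sv)) :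
    ‖Su - Sv‖ ≤ M * ‖u - v‖ / (R - 1) := by
  have hM : 0 ≤ M := (norm_nonneg _).trans (ha 0)
  refine le_of_tendsto (hSu.sub hSv).norm (Eventually.of_forall fun N => ?_)
  have hterm : ∀ k : ℕ,
      ‖a k / (u + k) - a k / (v + k)‖ ≤ M * ‖u - v‖ * (1 / ((R + k) * (R + k))) := fun k => by
    have hk : (0 : ℝ) ≤ k := k.cast_nonneg
    have h := norm_div_sub_div_le_of_le_re (a := a k) (by linarith : 0 < R + k)
      (by simp only [Complex.add_re, Complex.natCast_re]; linarith : R + k ≤ (u + k).re)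
      (by simp only [Complex.add_re, Complex.natCast_re]; linarith : R + k ≤ (v + k).re)
    rw [add_sub_add_right_eq_sub] at h
    rw [mul_one_div]
    exact h.trans (by gcongr; exact ha k)
  calc ‖∑ k ∈ Finset.range N, a k / (u + k) - ∑ k ∈ Finset.range N, a k / (v + k)‖
      ≤ ∑ k ∈ Finset.range N, ‖a k / (u + k) - a k / (v + k)‖ := by
        rw [← Finset.sum_sub_distrib]; exact norm_sum_le _ _
    _ ≤ ∑ k ∈ Finset.range N, M * ‖u - v‖ * (1 / ((R + k) * (R + k))) :=
        Finset.sum_le_sum fun k _ => hterm k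
    _ ≤ M * ‖u - v‖ * (1 / (R - 1)) := by
        rw [← Finset.mul_sum]; gcongr; exact sum_range_one_div_add_mul_self_le hR N
    _ = M * ‖u - v‖ / (R - 1) := mul_one_div _ _

theorem norm_exp_two_pi_I_mul (θ : ℝ) : ‖Complex.exp (2 * Real.pi * Complex.I * θ)‖ = 1 := by
  rw [show 2 * Real.pi * Complex.I * θ = ((2 * Real.pi * θ : ℝ) : ℂ) * Complex.I by
    push_cast; ring]
  exact Complex.norm_exp_ofReal_mul_I _

theorem stmt6_general (θ : ℝ) (l : ℂ) (hl : l = Complex.exp (2 * Real.pi * Complex.I * θ))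
    (f : ℂ → ℂ) (hf : Differentiable ℂ f)
    (S : ℂ × ℂ → ℂ)
    (hS : ∀ p : ℂ × ℂ, 1 < p.1.re →
      Tendsto (fun N : ℕ => ∑ k ∈ Finset.range N, f (l ^ k * p.2) / (p.1 + k))
        atTop (nhds (S p)))
    (δ : ℝ) :
    ∃ R : ℝ, 0 < R ∧
      Set.InjOn (fun p : ℂ × ℂ => (p.1 - S p, p.2))
        {p : ℂ × ℂ | R < p.1.re ∧ ‖p.2‖ < δ} := by
  obtain ⟨M, hM, hfM⟩ := ((isCompact_closedBall (0 : ℂ) δ).image_of_continuousOn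
    hf.continuous.continuousOn).isBounded.exists_pos_norm_le
  refine ⟨2 * M + 2, by linarith, ?_⟩
  rintro p ⟨hp, hpδ⟩ q ⟨hq, -⟩ hpq
  obtain ⟨h1, h2 : p.2 = q.2⟩ := Prod.mk.inj hpq
  have hcoeff : ∀ k : ℕ, ‖f (l ^ k * p.2)‖ ≤ M := fun k => hfM _ ⟨_, by
    rw [mem_closedBall_zero_iff, norm_mul, norm_pow, hl, norm_exp_two_pi_I_mul, one_pow, one_mul]
    exact hpδ.le, rfl⟩
  have hSq := hS q (by linarith)
  rw [← h2] at hSq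
  have hlip := norm_sub_le_of_tendsto_sum_div_add hcoeff (by linarith) hp hq
    (hS p (by linarith)) hSq
  rw [show S p - S q = p.1 - q.1 by linear_combination -h1, show 2 * M + 2 - 1 = 2 * M + 1 by ring,
    le_div_iff₀ (by linarith)] at hlip
  have hd : ‖p.1 - q.1‖ = 0 := by nlinarith [norm_nonneg (p.1 - q.1)]
  exact Prod.ext (sub_eq_zero.mp (norm_eq_zero.mp hd)) h2

/-- For `f` entire with `f(0)=0`, the map
`τ(u,w) = (u − ∑_{k≥0} f(λ^k w)/(u+k), w)` is injective on
`{Re u > R, |w| < δ}` for `R` large. -/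
theorem stmt6 (θ : ℝ) (l : ℂ) (hl : l = Complex.exp (2 * Real.pi * Complex.I * θ))
    (hdio : ∃ c r : ℝ, 0 < c ∧ 0 < r ∧ ∀ n : ℕ, 1 ≤ n →
      c * (n : ℝ) ^ (-r) ≤ ‖l ^ n - 1‖)
    (f : ℂ → ℂ) (hf : Differentiable ℂ f) (hf0 : f 0 = 0)
    (S : ℂ × ℂ → ℂ)
    (hS : ∀ p : ℂ × ℂ, 1 < p.1.re →
      Tendsto (fun N : ℕ => ∑ k ∈ Finset.range N, f (l ^ k * p.2) / (p.1 + k))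
        atTop (nhds (S p)))
    (δ : ℝ) (hδ : 0 < δ) :
    ∃ R : ℝ, 0 < R ∧
      Set.InjOn (fun p : ℂ × ℂ => (p.1 - S p, p.2))
        {p : ℂ × ℂ | R < p.1.re ∧ ‖p.2‖ < δ} :=
  stmt6_general θ l hl f hf S hS δ
end

section
/- Let λ = e^{2πiθ} with θ Diophantine and let f(w) = 1 + ∑_{ℓ≥1} d_ℓ w^ℓ be entire. Then for every δ > 0 there exists a constant M(δ) > 0 such that for all integers n ≥ 1 and all w with |w| ≤ δ, the ergodic-type sum satisfies |∑_{k=0}^{n−1} (f(λ^k w) − 1)| ≤ M(δ), i.e. the sums ∑_{k=0}^{n−1}(f(λ^k w) − 1) are bounded uniformly in n and in |w| ≤ δ. -/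
/-!
Expanding `f(λᵏw) - 1 = ∑_{ℓ ≥ 1} d_ℓ λ^{kℓ} w^ℓ` and summing over `k < n` first turns the
ergodic sum into `∑_ℓ d_ℓ w^ℓ ∑_{k<n} (λ^ℓ)^k`. Since `|λ| = 1`, each inner geometric sum is at
most `2 / |λ^ℓ - 1|`, which the Diophantine condition bounds by `(2/c) ℓ^m`, `m = ⌈r⌉`,
uniformly in `n`.
The resulting majorant `∑_ℓ (2/c) ℓ^m |d_ℓ| δ^ℓ` converges because `f` is entire.
-/

open Finset

theorem norm_geom_sum_le_of_le_norm_sub_one {K : Type*} [NormedDivisionRing K] {z : K}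
    {ε : ℝ} (hz : ‖z‖ ≤ 1) (hε : 0 < ε) (hzε : ε ≤ ‖z - 1‖) (n : ℕ) :
    ‖∑ k ∈ range n, z ^ k‖ ≤ 2 / ε := by
  have hz1 : z ≠ 1 := by
    rintro rfl
    simp only [sub_self, norm_zero] at hzε
    linarith
  have hnum : ‖z ^ n - 1‖ ≤ 2 :=
    calc ‖z ^ n - 1‖ ≤ ‖z‖ ^ n + ‖(1 : K)‖ := by rw [← norm_pow]; exact norm_sub_le _ _
      _ ≤ 2 := by rw [norm_one]; linarith [pow_le_one₀ (norm_nonneg z) hz (n := n)]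
  rw [geom_sum_eq hz1, norm_div]
  exact div_le_div₀ zero_le_two hnum hε hzε

theorem div_pow_ceil_le_mul_rpow_neg {c r x : ℝ} (hc : 0 ≤ c) (hx : 1 ≤ x) :
    c / x ^ ⌈r⌉₊ ≤ c * x ^ (-r) := by
  rw [div_eq_mul_inv, ← Real.rpow_natCast, ← Real.rpow_neg (by linarith)]
  exact mul_le_mul_of_nonneg_left
    (Real.rpow_le_rpow_of_exponent_le hx (neg_le_neg (Nat.le_ceil r))) hc

theorem summable_pow_mul_norm_mul_pow {K : Type*} [NormedField K] {a : ℕ → K} {z : K}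
    (hz : Summable fun ℓ ↦ a ℓ * z ^ ℓ) (m : ℕ) {ρ : ℝ} (hρ : 0 ≤ ρ) (hρz : ρ < ‖z‖) :
    Summable fun ℓ : ℕ ↦ (ℓ : ℝ) ^ m * (‖a ℓ‖ * ρ ^ ℓ) := by
  obtain ⟨C, hC⟩ := hz.tendsto_atTop_zero.norm.bddAbove_range
  have hz0 : 0 < ‖z‖ := hρ.trans_lt hρz
  set q := ρ / ‖z‖
  have hq : ‖q‖ < 1 := by
    rw [Real.norm_of_nonneg (by positivity)]; exact (div_lt_one hz0).2 hρz
  have hterm (ℓ : ℕ) : ‖a ℓ‖ * ρ ^ ℓ ≤ C * q ^ ℓ := by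
    have : ‖a ℓ‖ * ρ ^ ℓ = ‖a ℓ * z ^ ℓ‖ * q ^ ℓ := by
      rw [norm_mul, norm_pow, div_pow, mul_assoc, mul_div_cancel₀ _ (by positivity)]
    rw [this]
    exact mul_le_mul_of_nonneg_right (hC (Set.mem_range_self ℓ)) (by positivity)
  refine ((summable_pow_mul_geometric_of_norm_lt_one m hq).mul_left C).of_nonneg_of_le
    (fun ℓ ↦ by positivity) fun ℓ ↦ ?_
  calc (ℓ : ℝ) ^ m * (‖a ℓ‖ * ρ ^ ℓ) ≤ (ℓ : ℝ) ^ m * (C * q ^ ℓ) :=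
        mul_le_mul_of_nonneg_left (hterm ℓ) (by positivity)
    _ = C * ((ℓ : ℝ) ^ m * q ^ ℓ) := by ring

theorem hasSum_sum_range_comp_mul_pow {R : Type*} [CommSemiring R] [TopologicalSpace R]
    [ContinuousAdd R] {a : ℕ → R} {F : R → R} (hF : ∀ w, HasSum (fun ℓ ↦ a ℓ * w ^ ℓ) (F w))
    (l w : R) (n : ℕ) :
    HasSum (fun ℓ ↦ a ℓ * w ^ ℓ * ∑ k ∈ range n, (l ^ ℓ) ^ k)
      (∑ k ∈ range n, F (l ^ k * w)) := by
  refine (hasSum_sum fun k _ ↦ hF (l ^ k * w)).congr_fun fun ℓ ↦ ?_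
  rw [mul_sum]
  refine sum_congr rfl fun k _ ↦ ?_
  rw [mul_pow, ← pow_mul, ← pow_mul, mul_comm k ℓ]
  ring

theorem norm_sum_range_comp_mul_pow_le {K : Type*} [NormedField K] {a : ℕ → K} {F : K → K}
    (hF : ∀ w, HasSum (fun ℓ ↦ a ℓ * w ^ ℓ) (F w)) (ha : a 0 = 0) {l : K} {B : ℕ → ℝ} {M : ℝ}
    (hB : ∀ ℓ n, ℓ ≠ 0 → ‖∑ k ∈ range n, (l ^ ℓ) ^ k‖ ≤ B ℓ) {δ : ℝ}
    (hsum : HasSum (fun ℓ ↦ B ℓ * (‖a ℓ‖ * δ ^ ℓ)) M) (n : ℕ) {w : K} (hw : ‖w‖ ≤ δ) :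
    ‖∑ k ∈ range n, F (l ^ k * w)‖ ≤ M := by
  refine (hasSum_sum_range_comp_mul_pow hF l w n).norm_le_of_bounded hsum fun ℓ ↦ ?_
  rcases eq_or_ne ℓ 0 with rfl | hℓ
  · simp [ha]
  have hB0 : 0 ≤ B ℓ := (norm_nonneg _).trans (hB ℓ 0 hℓ)
  rw [norm_mul, norm_mul, norm_pow, mul_comm]
  gcongr
  exact hB ℓ n hℓ

/-- Uniform boundedness of the ergodic sums
`∑_{k=0}^{n−1} (f(λ^k w) − 1)` for `|w| ≤ δ`, for `f` entire with `f(0)=1` and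
`λ = e^{2πiθ}`, `θ` Diophantine. -/
theorem stmt9 (θ : ℝ) (l : ℂ) (hl : l = Complex.exp (2 * Real.pi * Complex.I * θ))
    (hdio : ∃ c r : ℝ, 0 < c ∧ 0 < r ∧ ∀ n : ℕ, 1 ≤ n →
      c * (n : ℝ) ^ (-r) ≤ ‖l ^ n - 1‖)
    (d : ℕ → ℂ) (f : ℂ → ℂ)
    (hf : ∀ w : ℂ, HasSum (fun ℓ : ℕ => (if ℓ = 0 then 0 else d ℓ) * w ^ ℓ) (f w - 1))
    (δ : ℝ) (hδ : 0 < δ) :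
    ∃ M : ℝ, 0 < M ∧ ∀ (n : ℕ) (w : ℂ), ‖w‖ ≤ δ →
      ‖∑ k ∈ Finset.range n, (f (l ^ k * w) - 1)‖ ≤ M := by
  obtain ⟨c, r, hc, -, hdio⟩ := hdio
  set m := ⌈r⌉₊
  have hl_norm : ‖l‖ = 1 := by
    rw [hl, show 2 * Real.pi * Complex.I * θ = ((2 * Real.pi * θ : ℝ) : ℂ) * Complex.I by
      push_cast; ring]
    exact Complex.norm_exp_ofReal_mul_I _
  have hgeom (ℓ n : ℕ) (hℓ : ℓ ≠ 0) :
      ‖∑ k ∈ range n, (l ^ ℓ) ^ k‖ ≤ 2 / c * (ℓ : ℝ) ^ m := by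
    have hℓ1 : (1 : ℝ) ≤ ℓ := Nat.one_le_cast.2 (Nat.one_le_iff_ne_zero.2 hℓ)
    have := norm_geom_sum_le_of_le_norm_sub_one (by rw [norm_pow, hl_norm, one_pow])
      (by positivity : 0 < c / (ℓ : ℝ) ^ m)
      ((div_pow_ceil_le_mul_rpow_neg hc.le hℓ1).trans (hdio ℓ (Nat.one_le_iff_ne_zero.2 hℓ))) n
    rwa [div_div_eq_mul_div, mul_div_right_comm] at this
  have hmajorant : Summable fun ℓ : ℕ ↦
      2 / c * (ℓ : ℝ) ^ m * (‖if ℓ = 0 then 0 else d ℓ‖ * δ ^ ℓ) := by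
    have h2δ : δ < ‖((2 * δ : ℝ) : ℂ)‖ := by
      rw [Complex.norm_real, Real.norm_of_nonneg (by positivity)]; linarith
    simpa only [mul_assoc] using
      (summable_pow_mul_norm_mul_pow (hf _).summable m hδ.le h2δ).mul_left (2 / c)
  refine ⟨∑' ℓ : ℕ, 2 / c * (ℓ : ℝ) ^ m * (‖if ℓ = 0 then 0 else d ℓ‖ * δ ^ ℓ) + 1,
    by positivity, fun n w hw ↦ ?_⟩
  exact (norm_sum_range_comp_mul_pow_le hf (if_pos rfl) hgeom hmajorant.hasSum n hw).trans
    (le_add_of_nonneg_right zero_le_one)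
end

section
/- Let H : U → ℂ² be a holomorphic map on U = {(u,w) : Re(u) > R, |w| < δ} of the form H(u,w) = (u + 1 + a(u,w), λw + b(u,w)), where |a(u,w)| < 1/2 and |b(u,w)| ≤ C/|u|² on U, with λ = e^{2πiθ}, |λ| = 1. Then there exists T ≥ R such that: for every (u₀,w₀) with Re(u₀) > T and |w₀| < δ/2, the orbit (u_n, w_n) = H^n(u₀,w₀) is defined for all n and satisfies Re(u_n) > T + n/2 and |w_n| < δ for all n ≥ 1. -/
/-!
Each step moves `Re u` right by more than `1/2` and perturbs `w` by at most `C / |u|²`, so along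
an orbit started at `Re u₀ > T` the total drift of `w` is at most `∑ₙ C / (T + n/2)²`. This sum
telescopes against `2C / (x - 1/2)`, hence is below `2C / (T - 1/2)`, which is `< δ/2` for
large `T`; an induction then keeps the orbit inside the domain.
-/

lemma div_sq_le_two_mul_div_sub_two_mul_div {C x : ℝ} (hC : 0 ≤ C) (hx : 1 / 2 < x) :
    C / x ^ 2 ≤ 2 * C / (x - 1 / 2) - 2 * C / x := by
  have hsub : 2 * C / (x - 1 / 2) - 2 * C / x = C / ((x - 1 / 2) * x) := by
    rw [div_sub_div _ _ (by linarith) (by linarith), div_eq_div_iff (by nlinarith) (by nlinarith)]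
    ring
  rw [hsub]
  exact div_le_div_of_nonneg_left hC (by nlinarith) (by nlinarith)

lemma exists_two_mul_div_sub_half_lt (R : ℝ) {δ C : ℝ} (hδ : 0 < δ) (hC : 0 ≤ C) :
    ∃ T, R ≤ T ∧ 1 / 2 < T ∧ 2 * C / (T - 1 / 2) < δ / 2 := by
  have h4 : 0 ≤ 4 * C / δ := by positivity
  refine ⟨max R 1 + 4 * C / δ, by linarith [le_max_left R 1], by linarith [le_max_right R 1], ?_⟩
  have hpos : 0 < max R 1 + 4 * C / δ - 1 / 2 := by linarith [le_max_right R 1]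
  rw [div_lt_iff₀ hpos]
  have hcancel : δ * (4 * C / δ) = 4 * C := by field_simp
  nlinarith [le_max_right R 1]

section Orbit

variable {l : ℂ} {R δ C : ℝ} {H : ℂ × ℂ → ℂ × ℂ} {a b : ℂ × ℂ → ℂ}

lemma re_fst_add_half_lt_and_norm_snd_le (hl : ‖l‖ = 1) (hC : 0 ≤ C)
    (hH : ∀ u w : ℂ, R < u.re → ‖w‖ < δ → H (u, w) = (u + 1 + a (u, w), l * w + b (u, w)))
    (ha : ∀ u w : ℂ, R < u.re → ‖w‖ < δ → ‖a (u, w)‖ < 1 / 2)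
    (hb : ∀ u w : ℂ, R < u.re → ‖w‖ < δ → ‖b (u, w)‖ ≤ C / ‖u‖ ^ 2)
    {x : ℝ} (hRx : R ≤ x) (hx : 0 < x) {p : ℂ × ℂ} (hp₁ : x < p.1.re) (hp₂ : ‖p.2‖ < δ) :
    x + 1 / 2 < (H p).1.re ∧ ‖(H p).2‖ ≤ ‖p.2‖ + C / x ^ 2 := by
  obtain ⟨u, w⟩ := p
  have hRu : R < u.re := hRx.trans_lt hp₁
  rw [hH u w hRu hp₂]
  constructor
  · have hare : -(1 / 2) < (a (u, w)).re :=
      neg_lt_of_abs_lt ((Complex.abs_re_le_norm _).trans_lt (ha u w hRu hp₂))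
    simp only [Complex.add_re, Complex.one_re]
    linarith
  · have hxu : x ≤ ‖u‖ := hp₁.le.trans (Complex.re_le_norm u)
    have hbx : ‖b (u, w)‖ ≤ C / x ^ 2 := (hb u w hRu hp₂).trans
      (div_le_div_of_nonneg_left hC (by positivity) (pow_le_pow_left₀ hx.le hxu 2))
    calc ‖l * w + b (u, w)‖ ≤ ‖l * w‖ + ‖b (u, w)‖ := norm_add_le _ _
      _ ≤ ‖w‖ + C / x ^ 2 := by rw [norm_mul, hl, one_mul]; gcongr

lemma re_iterate_fst_and_norm_iterate_snd_le (hl : ‖l‖ = 1) (hC : 0 ≤ C)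
    (hH : ∀ u w : ℂ, R < u.re → ‖w‖ < δ → H (u, w) = (u + 1 + a (u, w), l * w + b (u, w)))
    (ha : ∀ u w : ℂ, R < u.re → ‖w‖ < δ → ‖a (u, w)‖ < 1 / 2)
    (hb : ∀ u w : ℂ, R < u.re → ‖w‖ < δ → ‖b (u, w)‖ ≤ C / ‖u‖ ^ 2)
    {T : ℝ} (hRT : R ≤ T) (hT : 1 / 2 < T) {u₀ w₀ : ℂ} (hu₀ : T < u₀.re)
    (hw₀ : ‖w₀‖ + 2 * C / (T - 1 / 2) < δ) (n : ℕ) :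
    T + n / 2 < (H^[n] (u₀, w₀)).1.re ∧
      ‖(H^[n] (u₀, w₀)).2‖ ≤ ‖w₀‖ + 2 * C / (T - 1 / 2) - 2 * C / (T + n / 2 - 1 / 2) := by
  induction n with
  | zero => simpa using hu₀
  | succ n ih =>
    obtain ⟨hre, hnorm⟩ := ih
    have hn : (0 : ℝ) ≤ n / 2 := by positivity
    have hx : 1 / 2 < T + n / 2 := by linarith
    have htail : 0 ≤ 2 * C / (T + n / 2 - 1 / 2) := div_nonneg (by linarith) (by linarith)
    obtain ⟨hre', hnorm'⟩ := re_fst_add_half_lt_and_norm_snd_le hl hC hH ha hb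
      (x := T + n / 2) (by linarith) (by linarith) hre (by linarith)
    have hdrift := div_sq_le_two_mul_div_sub_two_mul_div hC hx
    rw [Function.iterate_succ_apply']
    push_cast
    constructor
    · linarith
    · have hshift : T + (n + 1) / 2 - 1 / 2 = T + n / 2 := by ring
      rw [hshift]
      linarith

end Orbit

theorem stmt11_general (l : ℂ) (hl : ‖l‖ = 1) (R δ C : ℝ)
    (hδ : 0 < δ) (hC : 0 < C)
    (H : ℂ × ℂ → ℂ × ℂ) (a b : ℂ × ℂ → ℂ)
    (hH : ∀ u w : ℂ, R < u.re → ‖w‖ < δ →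
      H (u, w) = (u + 1 + a (u, w), l * w + b (u, w)))
    (ha : ∀ u w : ℂ, R < u.re → ‖w‖ < δ → ‖a (u, w)‖ < 1 / 2)
    (hb : ∀ u w : ℂ, R < u.re → ‖w‖ < δ → ‖b (u, w)‖ ≤ C / ‖u‖ ^ 2) :
    ∃ T : ℝ, R ≤ T ∧ ∀ u₀ w₀ : ℂ, T < u₀.re → ‖w₀‖ < δ / 2 →
      ∀ n : ℕ, 1 ≤ n →
        T + n / 2 < (H^[n] (u₀, w₀)).1.re ∧ ‖(H^[n] (u₀, w₀)).2‖ < δ := by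
  obtain ⟨T, hRT, hT, hdrift⟩ := exists_two_mul_div_sub_half_lt R hδ hC.le
  refine ⟨T, hRT, fun u₀ w₀ hu₀ hw₀ n _ => ?_⟩
  have hw₀' : ‖w₀‖ + 2 * C / (T - 1 / 2) < δ := by linarith
  obtain ⟨hre, hnorm⟩ :=
    re_iterate_fst_and_norm_iterate_snd_le hl hC.le hH ha hb hRT hT hu₀ hw₀' n
  have hn : (0 : ℝ) ≤ n / 2 := by positivity
  have htail : 0 ≤ 2 * C / (T + n / 2 - 1 / 2) := div_nonneg (by linarith) (by linarith)
  refine ⟨hre, ?_⟩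
  calc ‖(H^[n] (u₀, w₀)).2‖ ≤ ‖w₀‖ + 2 * C / (T - 1 / 2) - 2 * C / (T + n / 2 - 1 / 2) := hnorm
    _ ≤ ‖w₀‖ + 2 * C / (T - 1 / 2) := sub_le_self _ htail
    _ < δ := hw₀'

/-- Orbit confinement: if `H(u,w) = (u+1+a(u,w), λw+b(u,w))` on
`{Re u > R, |w| < δ}` with `|a| < 1/2` and `|b| ≤ C/|u|²`, then there is
`T ≥ R` such that every orbit starting with `Re u₀ > T`, `|w₀| < δ/2` satisfies
`Re u_n > T + n/2` and `|w_n| < δ` for all `n ≥ 1`. -/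
theorem stmt11 (l : ℂ) (hl : ‖l‖ = 1) (R δ C : ℝ)
    (hR : 0 < R) (hδ : 0 < δ) (hC : 0 < C)
    (H : ℂ × ℂ → ℂ × ℂ) (a b : ℂ × ℂ → ℂ)
    (hH : ∀ u w : ℂ, R < u.re → ‖w‖ < δ →
      H (u, w) = (u + 1 + a (u, w), l * w + b (u, w)))
    (ha : ∀ u w : ℂ, R < u.re → ‖w‖ < δ → ‖a (u, w)‖ < 1 / 2)
    (hb : ∀ u w : ℂ, R < u.re → ‖w‖ < δ → ‖b (u, w)‖ ≤ C / ‖u‖ ^ 2) :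
    ∃ T : ℝ, R ≤ T ∧ ∀ u₀ w₀ : ℂ, T < u₀.re → ‖w₀‖ < δ / 2 →
      ∀ n : ℕ, 1 ≤ n →
        T + n / 2 < (H^[n] (u₀, w₀)).1.re ∧ ‖(H^[n] (u₀, w₀)).2‖ < δ :=
  stmt11_general l hl R δ C hδ hC H a b hH ha hb
end

section
/- Let φ : U → ℂ² be univalent on U = {u : Re(u) > ρ} × D_k (D_k the disk of radius k) with φ(u,w) = (u − A log u + o(1), w + o(1)) as Re(u) → ∞ uniformly for |w| < k. Then there exists r ≥ ρ such that the image φ(U) contains the set {u ∈ ℂ : Re(u − r) > |Im(u)|} × D_{k/2}. -/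
/-!
Write `φ = id + h` with `h (u, w) = (e₁ - A log u, e₂)`. To reach a target `(v, z)` of the sector,
look for a fixed point of `p ↦ (v, z) - h p` on `S = B̄(v, Re v / 2) × B̄(z, k / 4)`. The error
`(e₁, e₂)` is holomorphic and bounded by `k / 32` on the `k / 8`-neighbourhood of `S`, so Cauchy's
estimate makes it `1/4`-Lipschitz on `S`, and `A log` is `1/4`-Lipschitz there once `Re v ≥ 8 |A|`.
In the sector `|v| ≤ 2 Re v`, so `|A log u| = O(log Re v)` stays below `Re v / 2` for large `Re v`
and the map sends `S` into itself; Banach's fixed point theorem then produces the preimage.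
-/

open Metric Set Filter Complex
open scoped NNReal

theorem exists_add_eq_of_lipschitzOnWith {E : Type*} [NormedAddCommGroup E] [CompleteSpace E]
    {S : Set E} (hS : IsClosed S) (hne : S.Nonempty) {h : E → E} {K : ℝ≥0} (hK : K < 1)
    (hh : LipschitzOnWith K h S) {y : E} (hy : MapsTo (fun p => y - h p) S S) :
    ∃ p ∈ S, p + h p = y := by
  have hT : ContractingWith K (hy.restrict _ S S) := by
    refine ⟨hK, ?_⟩
    simpa using ((LipschitzWith.const y).lipschitzOnWith.sub hh).mapsToRestrict hy
  obtain ⟨p, hpS, hfix, -⟩ :=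
    hT.exists_fixedPoint' hS.isComplete hy hne.some_mem (edist_ne_top _ _)
  exact ⟨p, hpS, eq_sub_iff_add_eq.1 hfix.eq.symm⟩

section CauchyEstimate

variable {E F : Type*} [NormedAddCommGroup E] [NormedSpace ℂ E]
  [NormedAddCommGroup F] [NormedSpace ℂ F]

theorem norm_fderiv_le_of_forall_closedBall_norm_le {f : E → F} {x : E} {δ C : ℝ} (hδ : 0 < δ)
    (hf : DifferentiableOn ℂ f (closedBall x δ)) (hC : ∀ y ∈ closedBall x δ, ‖f y‖ ≤ C) :
    ‖fderiv ℂ f x‖ ≤ C / δ := by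
  have hC0 : 0 ≤ C := (norm_nonneg _).trans (hC x (mem_closedBall_self hδ.le))
  refine ContinuousLinearMap.opNorm_le_bound _ (by positivity) fun v => ?_
  rcases eq_or_ne v 0 with rfl | hv
  · simp
  have hv' : 0 < ‖v‖ := norm_pos_iff.2 hv
  -- Cauchy's estimate on the complex line `λ ↦ x + λ • v`, on the disc of radius `δ / ‖v‖`.
  set g : ℂ → F := fun μ => f (x + μ • v)
  have hline : MapsTo (fun μ : ℂ => x + μ • v) (closedBall 0 (δ / ‖v‖)) (closedBall x δ) := by
    intro μ hμ
    rw [mem_closedBall_zero_iff] at hμ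
    rw [mem_closedBall, dist_self_add_left, norm_smul]
    exact (le_div_iff₀ hv').1 hμ
  have hg : DiffContOnCl ℂ g (ball 0 (δ / ‖v‖)) :=
    (hf.comp (by fun_prop) hline).diffContOnCl_ball subset_rfl
  have hderiv : HasDerivAt g (fderiv ℂ f x v) 0 := by
    have hfx : DifferentiableAt ℂ f x := hf.differentiableAt (closedBall_mem_nhds x hδ)
    have hlin : HasDerivAt (fun μ : ℂ => x + μ • v) v 0 := by
      simpa using ((hasDerivAt_id (0 : ℂ)).smul_const v).const_add x
    have hfx' : HasFDerivAt f (fderiv ℂ f x) (x + (0 : ℂ) • v) := by simpa using hfx.hasFDerivAt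
    exact hfx'.comp_hasDerivAt 0 hlin
  have := Complex.norm_deriv_le_of_forall_mem_sphere_norm_le (by positivity) hg
    fun μ hμ => hC _ (hline (sphere_subset_closedBall hμ))
  rw [hderiv.deriv] at this
  calc ‖fderiv ℂ f x v‖ ≤ C / (δ / ‖v‖) := this
    _ = C / δ * ‖v‖ := by field_simp

theorem Convex.norm_sub_le_of_closedBall_subset {f : E → F} {s U : Set E} (hs : Convex ℝ s)
    {δ C : ℝ} (hδ : 0 < δ) (hU : ∀ x ∈ s, closedBall x δ ⊆ U) (hf : DifferentiableOn ℂ f U)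
    (hC : ∀ y ∈ U, ‖f y‖ ≤ C) {x y : E} (hx : x ∈ s) (hy : y ∈ s) :
    ‖f x - f y‖ ≤ C / δ * ‖x - y‖ :=
  hs.norm_image_sub_le_of_norm_fderiv_le
    (fun z hz => hf.differentiableAt (mem_of_superset (closedBall_mem_nhds z hδ) (hU z hz)))
    (fun z hz => norm_fderiv_le_of_forall_closedBall_norm_le hδ (hf.mono (hU z hz))
      fun w hw => hC w (hU z hz hw)) hy hx

end CauchyEstimate

namespace Complex

theorem norm_log_sub_log_le {a : ℝ} (ha : 0 < a) {u v : ℂ} (hu : a ≤ u.re) (hv : a ≤ v.re) :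
    ‖log u - log v‖ ≤ a⁻¹ * ‖u - v‖ := by
  have hslit : ∀ z : ℂ, a ≤ z.re → z ∈ slitPlane := fun z hz =>
    mem_slitPlane_iff.2 (Or.inl (ha.trans_le hz))
  refine (convex_halfSpace_re_ge a).norm_image_sub_le_of_norm_deriv_le
    (fun z hz => differentiableAt_log (hslit z hz)) (fun z hz => ?_) hv hu
  rw [(hasDerivAt_log (hslit z hz)).deriv, norm_inv]
  exact inv_anti₀ ha ((show a ≤ z.re from hz).trans (re_le_norm z))

theorem norm_log_le_log_norm_add_pi {u : ℂ} (hu : 1 ≤ ‖u‖) :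
    ‖log u‖ ≤ Real.log ‖u‖ + Real.pi := by
  calc ‖log u‖ ≤ |(log u).re| + |(log u).im| := norm_le_abs_re_add_abs_im _
    _ ≤ Real.log ‖u‖ + Real.pi := by
      rw [log_re, log_im, abs_of_nonneg (Real.log_nonneg hu)]
      gcongr
      exact abs_arg_le_pi u

theorem re_sub_le_re_of_mem_closedBall {u v : ℂ} {R : ℝ} (hu : u ∈ closedBall v R) :
    v.re - R ≤ u.re := by
  have h := (abs_re_le_norm (u - v)).trans (mem_closedBall_iff_norm.1 hu)
  rw [sub_re] at h
  linarith [abs_le.1 h]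

end Complex

theorem eventually_mul_log_add_le (a b : ℝ) {c : ℝ} (hc : 0 < c) :
    ∀ᶠ t in atTop, a * Real.log t + b ≤ c * t := by
  have hlo : (fun t => a * Real.log t + b) =o[atTop] id :=
    (Real.isLittleO_log_id_atTop.const_mul_left a).add (Asymptotics.isLittleO_const_id_atTop b)
  filter_upwards [hlo.bound hc, eventually_ge_atTop 0] with t ht ht0
  rw [Real.norm_eq_abs, Real.norm_eq_abs, id, abs_of_nonneg ht0] at ht
  exact (le_abs_self _).trans ht

def halfPlaneTimesDisk (c k : ℝ) : Set (ℂ × ℂ) := {p | c < p.1.re ∧ ‖p.2‖ < k}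

theorem halfPlaneTimesDisk_subset {c c' : ℝ} (h : c ≤ c') (k : ℝ) :
    halfPlaneTimesDisk c' k ⊆ halfPlaneTimesDisk c k :=
  fun _ hp => ⟨h.trans_lt hp.1, hp.2⟩

theorem closedBall_subset_halfPlaneTimesDisk {c k R : ℝ} {v z : ℂ} {p : ℂ × ℂ}
    (hp : p ∈ closedBall v R ×ˢ closedBall z (k / 4)) (hz : ‖z‖ < k / 2)
    (hvc : c + k / 8 < v.re - R) : closedBall p (k / 8) ⊆ halfPlaneTimesDisk c k := by
  intro q hq
  rw [← closedBall_prod_same, mem_prod] at hq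
  refine ⟨?_, ?_⟩
  · linarith [re_sub_le_re_of_mem_closedBall hp.1, re_sub_le_re_of_mem_closedBall hq.1]
  · linarith [norm_le_of_mem_closedBall hp.2, norm_le_of_mem_closedBall hq.2, norm_nonneg z]

theorem Convex.norm_sub_log_sub_le {A : ℂ} {a δ ε : ℝ} {e : ℂ × ℂ → ℂ × ℂ}
    {S U : Set (ℂ × ℂ)} (hS : Convex ℝ S) (ha : 0 < a) (hre : ∀ p ∈ S, a ≤ p.1.re)
    (hδ : 0 < δ) (hU : ∀ p ∈ S, closedBall p δ ⊆ U) (he : DifferentiableOn ℂ e U)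
    (heb : ∀ p ∈ U, ‖e p‖ ≤ ε) {p q : ℂ × ℂ} (hp : p ∈ S) (hq : q ∈ S) :
    ‖(e p - (A * log p.1, 0)) - (e q - (A * log q.1, 0))‖ ≤ (‖A‖ / a + ε / δ) * ‖p - q‖ :=
  calc ‖(e p - (A * log p.1, 0)) - (e q - (A * log q.1, 0))‖
      = ‖(e p - e q) - (A * (log p.1 - log q.1), (0 : ℂ))‖ := by
        congr 1; ext <;> simp only [Prod.fst_sub, Prod.snd_sub] <;> ring
    _ ≤ ‖e p - e q‖ + ‖(A * (log p.1 - log q.1), (0 : ℂ))‖ := norm_sub_le _ _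
    _ = ‖e p - e q‖ + ‖A‖ * ‖log p.1 - log q.1‖ := by
        rw [Prod.norm_mk (A * _) (0 : ℂ), norm_zero, max_eq_left (norm_nonneg _), norm_mul]
    _ ≤ ε / δ * ‖p - q‖ + ‖A‖ * (a⁻¹ * ‖p.1 - q.1‖) := by
        gcongr
        · exact hS.norm_sub_le_of_closedBall_subset hδ hU he heb hp hq
        · exact norm_log_sub_log_le ha (hre p hp) (hre q hq)
    _ = ‖A‖ / a * ‖p.1 - q.1‖ + ε / δ * ‖p - q‖ := by ring
    _ ≤ (‖A‖ / a + ε / δ) * ‖p - q‖ := by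
        rw [add_mul]
        gcongr
        exact norm_fst_le (p - q)

theorem exists_add_sub_log_eq {A : ℂ} {c k : ℝ} {e : ℂ × ℂ → ℂ × ℂ}
    (he : DifferentiableOn ℂ e (halfPlaneTimesDisk c k))
    (heb : ∀ p ∈ halfPlaneTimesDisk c k, ‖e p‖ ≤ k / 32) {v z : ℂ} (hv : |v.im| ≤ v.re)
    (hz : ‖z‖ < k / 2) (hv₂ : 2 ≤ v.re) (hvc : c + k / 8 < v.re / 2) (hvA : 8 * ‖A‖ ≤ v.re)
    (hvlog : ‖A‖ * (Real.log (3 * v.re) + Real.pi) + k / 32 ≤ v.re / 2) :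
    ∃ p ∈ halfPlaneTimesDisk c k, p + (e p - (A * log p.1, 0)) = (v, z) := by
  set t := v.re
  set S := closedBall v (t / 2) ×ˢ closedBall z (k / 4)
  have hk : 0 < k := by linarith [norm_nonneg z]
  have hre : ∀ p ∈ S, t / 2 ≤ p.1.re := fun p hp => by
    linarith [re_sub_le_re_of_mem_closedBall hp.1]
  have hball : ∀ p ∈ S, closedBall p (k / 8) ⊆ halfPlaneTimesDisk c k := fun p hp =>
    closedBall_subset_halfPlaneTimesDisk hp hz (by linarith)
  have hSU : S ⊆ halfPlaneTimesDisk c k := fun p hp =>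
    hball p hp (mem_closedBall_self (by positivity))
  have hlip : LipschitzOnWith (1 / 2) (fun p => e p - (A * log p.1, 0)) S := by
    refine LipschitzOnWith.of_dist_le_mul fun p hp q hq => ?_
    rw [dist_eq_norm, dist_eq_norm]
    refine ((convex_closedBall v (t / 2)).prod (convex_closedBall z (k / 4))
      |>.norm_sub_log_sub_le (by linarith) hre (by positivity) hball he heb hp hq).trans ?_
    have hA : ‖A‖ / (t / 2) ≤ 1 / 4 := by rw [div_le_iff₀ (by linarith)]; linarith
    have hek : k / 32 / (k / 8) = 1 / 4 := by field_simp; norm_num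
    rw [hek]
    push_cast
    gcongr
    linarith
  have hmaps : MapsTo (fun p => (v, z) - (e p - (A * log p.1, 0))) S S := by
    intro p hp
    have hep : ‖(e p).1‖ ≤ k / 32 ∧ ‖(e p).2‖ ≤ k / 32 :=
      ⟨(norm_fst_le _).trans (heb p (hSU hp)), (norm_snd_le _).trans (heb p (hSU hp))⟩
    have hp₁ : 1 ≤ ‖p.1‖ := by linarith [hre p hp, re_le_norm p.1]
    have hvnorm : ‖v‖ ≤ 2 * t := by
      linarith [norm_le_abs_re_add_abs_im v, abs_of_nonneg (show 0 ≤ t by linarith)]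
    have hlog : ‖log p.1‖ ≤ Real.log (3 * t) + Real.pi :=
      (norm_log_le_log_norm_add_pi hp₁).trans <| by
        gcongr
        linarith [norm_le_of_mem_closedBall hp.1]
    refine ⟨mem_closedBall_iff_norm.2 ?_, mem_closedBall_iff_norm.2 ?_⟩
    · calc ‖((v, z) - (e p - (A * log p.1, 0))).1 - v‖ = ‖A * log p.1 - (e p).1‖ := by
            congr 1; simp only [Prod.fst_sub]; ring
        _ ≤ ‖A‖ * ‖log p.1‖ + ‖(e p).1‖ := by rw [← norm_mul]; exact norm_sub_le _ _
        _ ≤ ‖A‖ * (Real.log (3 * t) + Real.pi) + k / 32 := by gcongr; exact hep.1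
        _ ≤ t / 2 := hvlog
    · simpa using hep.2.trans (by linarith)
  obtain ⟨p, hpS, hp⟩ := exists_add_eq_of_lipschitzOnWith (S := S)
    (isClosed_closedBall.prod isClosed_closedBall)
    ⟨(v, z), mem_closedBall_self (by linarith), mem_closedBall_self (by positivity)⟩
    (by norm_num) hlip hmaps
  exact ⟨p, hSU hpS, hp⟩

theorem exists_forall_exists_add_sub_log_eq {A : ℂ} {c k : ℝ} {e : ℂ × ℂ → ℂ × ℂ}
    (he : DifferentiableOn ℂ e (halfPlaneTimesDisk c k))
    (heb : ∀ p ∈ halfPlaneTimesDisk c k, ‖e p‖ ≤ k / 32) :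
    ∃ r : ℝ, ∀ v z : ℂ, |v.im| < v.re - r → ‖z‖ < k / 2 →
      ∃ p ∈ halfPlaneTimesDisk c k, p + (e p - (A * log p.1, 0)) = (v, z) := by
  have hlog : ∀ᶠ t in atTop, ‖A‖ * (Real.log (3 * t) + Real.pi) + k / 32 ≤ t / 2 := by
    filter_upwards [eventually_mul_log_add_le ‖A‖ (‖A‖ * (Real.log 3 + Real.pi) + k / 32)
      (c := 1 / 2) (by norm_num), eventually_gt_atTop 0] with t ht ht₀
    rw [Real.log_mul (by norm_num) ht₀.ne']
    linarith
  obtain ⟨r, hr⟩ := eventually_atTop.1 <| (eventually_ge_atTop 2).and <|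
    (eventually_gt_atTop (2 * c + k / 4)).and <| (eventually_ge_atTop (8 * ‖A‖)).and hlog
  refine ⟨r, fun v z hv hz => ?_⟩
  obtain ⟨hv₂, hvc, hvA, hvlog⟩ := hr v.re (by linarith [abs_nonneg v.im])
  have hr₂ : 2 ≤ r := (hr r le_rfl).1
  exact exists_add_sub_log_eq he heb (by linarith) hz hv₂ (by linarith) hvA hvlog

theorem differentiableOn_remainder {A : ℂ} {ρ c k : ℝ} {φ : ℂ × ℂ → ℂ × ℂ}
    {e₁ e₂ : ℂ × ℂ → ℂ} (hdiff : DifferentiableOn ℂ φ (halfPlaneTimesDisk ρ k))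
    (hform : ∀ p ∈ halfPlaneTimesDisk ρ k,
      φ p = (p.1 - A * log p.1 + e₁ p, p.2 + e₂ p))
    (hρc : ρ ≤ c) (hc : 0 ≤ c) :
    DifferentiableOn ℂ (fun p => (e₁ p, e₂ p)) (halfPlaneTimesDisk c k) := by
  have hsub := halfPlaneTimesDisk_subset hρc k
  refine DifferentiableOn.congr (f := fun p => φ p - p + (A * log p.1, 0)) ?_ fun p hp => ?_
  · refine ((hdiff.mono hsub).sub differentiableOn_id).add
      (DifferentiableOn.prodMk (fun p hp => ?_) (differentiableOn_const 0))
    have hlog := differentiableAt_log (mem_slitPlane_iff.2 (Or.inl (hc.trans_lt hp.1)))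
    exact ((hlog.comp p differentiableAt_fst).const_mul A).differentiableWithinAt
  · rw [hform p (hsub hp)]
    ext <;> simp only [Prod.fst_add, Prod.fst_sub, Prod.snd_add, Prod.snd_sub] <;> ring

theorem stmt16_general (A : ℂ) (ρ k : ℝ) (hk : 0 < k)
    (φ : ℂ × ℂ → ℂ × ℂ)
    (hdiff : DifferentiableOn ℂ φ {p : ℂ × ℂ | ρ < p.1.re ∧ ‖p.2‖ < k})
    (e₁ e₂ : ℂ × ℂ → ℂ)
    (hform : ∀ p ∈ {p : ℂ × ℂ | ρ < p.1.re ∧ ‖p.2‖ < k},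
      φ p = (p.1 - A * Complex.log p.1 + e₁ p, p.2 + e₂ p))
    (hsmall : ∀ ε : ℝ, 0 < ε → ∃ M : ℝ,
      ∀ p ∈ {p : ℂ × ℂ | ρ < p.1.re ∧ ‖p.2‖ < k},
        M < p.1.re → ‖e₁ p‖ < ε ∧ ‖e₂ p‖ < ε) :
    ∃ r : ℝ, ρ ≤ r ∧
      {p : ℂ × ℂ | |p.1.im| < p.1.re - r ∧ ‖p.2‖ < k / 2} ⊆
        φ '' {p : ℂ × ℂ | ρ < p.1.re ∧ ‖p.2‖ < k} := by
  obtain ⟨M, hM⟩ := hsmall (k / 32) (by positivity)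
  set c := max (max ρ M) 0
  have hsub : halfPlaneTimesDisk c k ⊆ halfPlaneTimesDisk ρ k :=
    halfPlaneTimesDisk_subset (le_max_of_le_left (le_max_left _ _)) k
  have heb : ∀ p ∈ halfPlaneTimesDisk c k, ‖(e₁ p, e₂ p)‖ ≤ k / 32 := fun p hp => by
    have := hM p (hsub hp) ((le_max_of_le_left (le_max_right _ _)).trans_lt hp.1)
    exact max_le this.1.le this.2.le
  obtain ⟨r, hr⟩ := exists_forall_exists_add_sub_log_eq (A := A)
    (differentiableOn_remainder hdiff hform (le_max_of_le_left (le_max_left _ _))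
      (le_max_right _ _)) heb
  refine ⟨max r ρ, le_max_right _ _, fun ⟨v, z⟩ ⟨hv, hz⟩ => ?_⟩
  obtain ⟨p, hp, hpvz⟩ := hr v z (hv.trans_le (by gcongr; exact le_max_left _ _)) hz
  refine ⟨p, hsub hp, ?_⟩
  rw [hform p (hsub hp), ← hpvz]
  exact Prod.ext (by simp only [Prod.fst_add, Prod.fst_sub]; ring) (by simp)

/-- If `φ` is univalent on `U = {Re u > ρ} × D_k` with
`φ(u,w) = (u − A log u + o(1), w + o(1))` as `Re u → ∞` uniformly in `|w| < k`,
then `φ(U)` contains `{Re(u−r) > |Im u|} × D_{k/2}` for some `r ≥ ρ`. -/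
theorem stmt16 (A : ℂ) (ρ k : ℝ) (hk : 0 < k)
    (φ : ℂ × ℂ → ℂ × ℂ)
    (hinj : Set.InjOn φ {p : ℂ × ℂ | ρ < p.1.re ∧ ‖p.2‖ < k})
    (hdiff : DifferentiableOn ℂ φ {p : ℂ × ℂ | ρ < p.1.re ∧ ‖p.2‖ < k})
    (e₁ e₂ : ℂ × ℂ → ℂ)
    (hform : ∀ p ∈ {p : ℂ × ℂ | ρ < p.1.re ∧ ‖p.2‖ < k},
      φ p = (p.1 - A * Complex.log p.1 + e₁ p, p.2 + e₂ p))
    (hsmall : ∀ ε : ℝ, 0 < ε → ∃ M : ℝ,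
      ∀ p ∈ {p : ℂ × ℂ | ρ < p.1.re ∧ ‖p.2‖ < k},
        M < p.1.re → ‖e₁ p‖ < ε ∧ ‖e₂ p‖ < ε) :
    ∃ r : ℝ, ρ ≤ r ∧
      {p : ℂ × ℂ | |p.1.im| < p.1.re - r ∧ ‖p.2‖ < k / 2} ⊆
        φ '' {p : ℂ × ℂ | ρ < p.1.re ∧ ‖p.2‖ < k} :=
  stmt16_general A ρ k hk φ hdiff e₁ e₂ hform hsmall
end

section
/- Define F₁(z,w) = (z, λw + z), F₂(z,w) = (z e^w, w), F₃(z,w) = (z, w − z), F₄(z,w) = (z e^{−w}, w), F₅(z,w) = (z, w e^z), and F = F₅ ∘ F₄ ∘ F₃ ∘ F₂ ∘ F₁. Then F is a holomorphic automorphism of ℂ², F preserves the line {0} × ℂ with F(0,w) = (0, λw), and its expansion in z satisfies: the first coordinate of F is z + e^{λw} z² + O(z³) and the second coordinate is λw − z ∑_{k=2}^{∞} (λ^k/k!) w^k + O(z²). -/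
/-!
Each factor of `F` is a fiberwise bijection of `ℂ × ℂ` over one coordinate, so `F` is bijective.
Writing `c = λw`, the factors collapse to
`F (z, w) = (z e^{z e^{c+z}}, (c + z - z e^{c+z}) e^{z e^{z e^{c+z}}})`,
and the Taylor coefficients at `z = 0` follow from `(z h)'(0) = h(0)` and `(z h)''(0) = 2 h'(0)`.
-/

open Function Complex

section Fiberwise

variable {α β γ : Type*}

theorem bijective_fiberwise_snd {φ : α → β → γ} (h : ∀ a, Bijective (φ a)) :
    Bijective fun p : α × β => (p.1, φ p.1 p.2) :=
  (Equiv.prodShear (Equiv.refl α) fun a => Equiv.ofBijective _ (h a)).bijective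

theorem bijective_fiberwise_fst {φ : β → α → γ} (h : ∀ b, Bijective (φ b)) :
    Bijective fun p : α × β => (φ p.2 p.1, p.2) :=
  Prod.swap_bijective.comp ((bijective_fiberwise_snd h).comp Prod.swap_bijective)

end Fiberwise

section IdMul

variable {𝕜 : Type*} [NontriviallyNormedField 𝕜] {h : 𝕜 → 𝕜}

theorem hasDerivAt_id_mul_zero (hh : DifferentiableAt 𝕜 h 0) :
    HasDerivAt (fun z => z * h z) (h 0) 0 := by
  simpa using (hasDerivAt_id' (0 : 𝕜)).fun_mul hh.hasDerivAt

theorem iteratedDeriv_two_id_mul_zero (hh : ContDiff 𝕜 2 h) :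
    iteratedDeriv 2 (fun z => z * h z) 0 = 2 * deriv h 0 := by
  obtain ⟨hdiff, -, hh'⟩ := (contDiff_succ_iff_deriv (n := 1)).mp hh
  have hderiv : deriv (fun z => z * h z) = fun z => h z + z * deriv h z := funext fun z => by
    simpa using ((hasDerivAt_id' z).fun_mul (hdiff z).hasDerivAt).deriv
  rw [iteratedDeriv_succ, iteratedDeriv_one, hderiv, two_mul]
  exact ((hdiff 0).hasDerivAt.add
    (hasDerivAt_id_mul_zero (hh'.differentiable one_ne_zero 0))).deriv

end IdMul

noncomputable def shearComposite (l : ℂ) : ℂ × ℂ → ℂ × ℂ :=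
  (fun p : ℂ × ℂ => (p.1, p.2 * Complex.exp p.1)) ∘
  (fun p : ℂ × ℂ => (p.1 * Complex.exp (-p.2), p.2)) ∘
  (fun p : ℂ × ℂ => (p.1, p.2 - p.1)) ∘
  (fun p : ℂ × ℂ => (p.1 * Complex.exp p.2, p.2)) ∘
  (fun p : ℂ × ℂ => (p.1, l * p.2 + p.1))

theorem shearComposite_apply (l z w : ℂ) :
    shearComposite l (z, w) =
      (z * exp (z * exp (l * w + z)),
        (l * w + z - z * exp (l * w + z)) * exp (z * exp (z * exp (l * w + z)))) := by
  have hfst : z * exp (l * w + z) * exp (-(l * w + z - z * exp (l * w + z))) =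
      z * exp (z * exp (l * w + z)) := by
    rw [mul_assoc, ← exp_add]
    ring_nf
  simp only [shearComposite, comp_apply, hfst]

theorem shearComposite_bijective {l : ℂ} (hl : l ≠ 0) : Bijective (shearComposite l) := by
  have hexp (c : ℂ) : Bijective (· * exp c) := mulRight_bijective₀ _ (exp_ne_zero c)
  refine (bijective_fiberwise_snd fun z => hexp z).comp <|
    (bijective_fiberwise_fst fun w => hexp (-w)).comp <|
    (bijective_fiberwise_snd fun z => (Equiv.subRight z).bijective).comp <|
    (bijective_fiberwise_fst fun w => hexp w).comp <|
    bijective_fiberwise_snd fun z => (AddGroup.addRight_bijective z).comp (mulLeft_bijective₀ l hl)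

theorem differentiable_shearComposite (l : ℂ) : Differentiable ℂ (shearComposite l) := by
  unfold shearComposite
  fun_prop

theorem shearComposite_zero (l w : ℂ) : shearComposite l (0, w) = (0, l * w) := by
  simp [shearComposite_apply]

theorem deriv_shearComposite_fst (l w : ℂ) :
    deriv (fun z => (shearComposite l (z, w)).1) 0 = 1 := by
  simp only [shearComposite_apply]
  simpa using (hasDerivAt_id_mul_zero (h := fun z => exp (z * exp (l * w + z))) (by fun_prop)).deriv

theorem hasDerivAt_mul_exp_const_add (c : ℂ) :
    HasDerivAt (fun z => z * exp (c + z)) (exp c) 0 := by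
  simpa using hasDerivAt_id_mul_zero (h := fun z => exp (c + z)) (by fun_prop)

theorem iteratedDeriv_two_shearComposite_fst (l w : ℂ) :
    iteratedDeriv 2 (fun z => (shearComposite l (z, w)).1) 0 = 2 * exp (l * w) := by
  simp only [shearComposite_apply]
  rw [iteratedDeriv_two_id_mul_zero (by fun_prop)]
  simpa using (hasDerivAt_mul_exp_const_add (l * w)).cexp.deriv

theorem deriv_shearComposite_snd (l w : ℂ) :
    deriv (fun z => (shearComposite l (z, w)).2) 0 = -(exp (l * w) - 1 - l * w) := by
  simp only [shearComposite_apply]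
  have hfactor : HasDerivAt (fun z => l * w + z - z * exp (l * w + z)) (1 - exp (l * w)) 0 :=
    ((hasDerivAt_id 0).const_add _).sub (hasDerivAt_mul_exp_const_add (l * w))
  have hexp := (hasDerivAt_id_mul_zero (h := fun z => exp (z * exp (l * w + z)))
    (by fun_prop)).cexp
  rw [(hfactor.fun_mul hexp).deriv]
  simp only [zero_mul, add_zero, exp_zero, mul_one]
  ring

/-- The composition of shears and overshears
`F = F₅ ∘ F₄ ∘ F₃ ∘ F₂ ∘ F₁` is a holomorphic automorphism of `ℂ²` preserving
`{0} × ℂ` with `F(0,w) = (0,λw)`, whose expansion in `z` satisfies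
`π₁F = z + e^{λw} z² + O(z³)` and `π₂F = λw − (e^{λw} − 1 − λw) z + O(z²)`. -/
theorem stmt18 (l : ℂ) (hl : ‖l‖ = 1)
    (F : ℂ × ℂ → ℂ × ℂ)
    (hF : F = (fun p : ℂ × ℂ => (p.1, p.2 * Complex.exp p.1)) ∘
              (fun p : ℂ × ℂ => (p.1 * Complex.exp (-p.2), p.2)) ∘
              (fun p : ℂ × ℂ => (p.1, p.2 - p.1)) ∘
              (fun p : ℂ × ℂ => (p.1 * Complex.exp p.2, p.2)) ∘
              (fun p : ℂ × ℂ => (p.1, l * p.2 + p.1))) :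
    Function.Bijective F ∧ Differentiable ℂ F ∧
    (∀ w : ℂ, F (0, w) = (0, l * w)) ∧
    (∀ w : ℂ, deriv (fun z : ℂ => (F (z, w)).1) 0 = 1) ∧
    (∀ w : ℂ, iteratedDeriv 2 (fun z : ℂ => (F (z, w)).1) 0 = 2 * Complex.exp (l * w)) ∧
    (∀ w : ℂ, deriv (fun z : ℂ => (F (z, w)).2) 0 = -(Complex.exp (l * w) - 1 - l * w)) := by
  have hl0 : l ≠ 0 := by
    rintro rfl
    simp at hl
  replace hF : F = shearComposite l := hF
  subst hF
  exact ⟨shearComposite_bijective hl0, differentiable_shearComposite l, shearComposite_zero l,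
    deriv_shearComposite_fst l, iteratedDeriv_two_shearComposite_fst l, deriv_shearComposite_snd l⟩
end
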